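/- Let f = (f11, f12, f22) ∈ C²_c(S²; D1). Then Tf(x) = 0 for all x ∈ ℝ² if and only if there exists a continuously differentiable function φ : ℝ² → ℝ with gradient ∇φ = (u2² f11 + u1² f22, −2 u1² f12) on ℝ². (Kernel description of the transverse V-line transform.) -/

import Mathlib

noncomputable section

open MeasureTheory

/-- The divergent beam transform `X_w h (x) = ∫₀^∞ h(x + t w) dt`. -/
def Xbeam (w : ℝ × ℝ) (h : ℝ × ℝ → ℝ) (x : ℝ × ℝ) : ℝ :=
  ∫ t in Set.Ioi (0 : ℝ), h (x + t • w)

/-- The k-th moment divergent beam transform `X_w^k h (x) = ∫₀^∞ t^k h(x + t w) dt`. -/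
def Xmom (k : ℕ) (w : ℝ × ℝ) (h : ℝ × ℝ → ℝ) (x : ℝ × ℝ) : ℝ :=
  ∫ t in Set.Ioi (0 : ℝ), t ^ k * h (x + t • w)

/-- The directional derivative `D_w h = w ⋅ ∇h`. -/
def Dir (w : ℝ × ℝ) (h : ℝ × ℝ → ℝ) (x : ℝ × ℝ) : ℝ :=
  fderiv ℝ h x w

/-- Support contained in the open unit disc `D1`. -/
def SuppInDisc (h : ℝ × ℝ → ℝ) : Prop :=
  ∀ x : ℝ × ℝ, 1 ≤ x.1 ^ 2 + x.2 ^ 2 → h x = 0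

/-- The longitudinal V-line transform. -/
def VlineL (u1 u2 : ℝ) (f11 f12 f22 : ℝ × ℝ → ℝ) : ℝ × ℝ → ℝ :=
  Xbeam (u1, u2) (fun y => u1 ^ 2 * f11 y + 2 * u1 * u2 * f12 y + u2 ^ 2 * f22 y)
    + Xbeam (-u1, u2) (fun y => u1 ^ 2 * f11 y - 2 * u1 * u2 * f12 y + u2 ^ 2 * f22 y)

/-- The transverse V-line transform. -/
def VlineT (u1 u2 : ℝ) (f11 f12 f22 : ℝ × ℝ → ℝ) : ℝ × ℝ → ℝ :=
  Xbeam (u1, u2) (fun y => u2 ^ 2 * f11 y - 2 * u1 * u2 * f12 y + u1 ^ 2 * f22 y)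
    + Xbeam (-u1, u2) (fun y => u2 ^ 2 * f11 y + 2 * u1 * u2 * f12 y + u1 ^ 2 * f22 y)

/-- The mixed V-line transform. -/
def VlineM (u1 u2 : ℝ) (f11 f12 f22 : ℝ × ℝ → ℝ) : ℝ × ℝ → ℝ :=
  Xbeam (u1, u2) (fun y => -(u1 * u2) * f11 y + (u1 ^ 2 - u2 ^ 2) * f12 y + u1 * u2 * f22 y)
    + Xbeam (-u1, u2) (fun y => u1 * u2 * f11 y + (u1 ^ 2 - u2 ^ 2) * f12 y - u1 * u2 * f22 y)

/-- The k-th moment longitudinal V-line transform. -/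
def VlineLk (k : ℕ) (u1 u2 : ℝ) (f11 f12 f22 : ℝ × ℝ → ℝ) : ℝ × ℝ → ℝ :=
  Xmom k (u1, u2) (fun y => u1 ^ 2 * f11 y + 2 * u1 * u2 * f12 y + u2 ^ 2 * f22 y)
    + Xmom k (-u1, u2) (fun y => u1 ^ 2 * f11 y - 2 * u1 * u2 * f12 y + u2 ^ 2 * f22 y)

/-- The k-th moment transverse V-line transform. -/
def VlineTk (k : ℕ) (u1 u2 : ℝ) (f11 f12 f22 : ℝ × ℝ → ℝ) : ℝ × ℝ → ℝ :=
  Xmom k (u1, u2) (fun y => u2 ^ 2 * f11 y - 2 * u1 * u2 * f12 y + u1 ^ 2 * f22 y)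
    + Xmom k (-u1, u2) (fun y => u2 ^ 2 * f11 y + 2 * u1 * u2 * f12 y + u1 ^ 2 * f22 y)

/-- The k-th moment mixed V-line transform. -/
def VlineMk (k : ℕ) (u1 u2 : ℝ) (f11 f12 f22 : ℝ × ℝ → ℝ) : ℝ × ℝ → ℝ :=
  Xmom k (u1, u2) (fun y => -(u1 * u2) * f11 y + (u1 ^ 2 - u2 ^ 2) * f12 y + u1 * u2 * f22 y)
    + Xmom k (-u1, u2) (fun y => u1 * u2 * f11 y + (u1 ^ 2 - u2 ^ 2) * f12 y - u1 * u2 * f22 y)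

/-!
Write `g_u`, `g_v` for the integrands of the two branches, so that `Tf = X_u g_u + X_v g_v`.
For `h` of class `C¹` with compact support, `X_w h` is differentiable with `D_w (X_w h) = -h`,
and for differentiable `φ`, `∫₀^∞ D_w φ (x + t w) dt = lim_{t → ∞} φ (x + t w) - φ x`.
Since `u` and `v` form a basis, `∇φ` has the prescribed components iff `D_u φ = u₁ g_u` and
`D_v φ = -u₁ g_v`.

If `Tf = 0`, then `φ := -u₁ X_u g_u = u₁ X_v g_v` has exactly these directional derivatives.
Conversely, `∇φ` vanishes on the half-plane `x₂ > 1`, so `φ` is a constant `c` there; both rays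
from `x` enter that half-plane, whence `u₁ X_u g_u (x) = c - φ x = -u₁ X_v g_v (x)`.
-/

open Set Filter Topology

section Ray

variable {E F : Type*} [NormedAddCommGroup E] [NormedSpace ℝ E] [NormedAddCommGroup F]

theorem isClosedEmbedding_ray (x : E) {w : E} (hw : w ≠ 0) :
    IsClosedEmbedding fun t : ℝ => x + t • w :=
  (Homeomorph.addLeft x).isClosedEmbedding.comp (isClosedEmbedding_smul_left hw)

theorem HasCompactSupport.comp_ray {h : E → F} (hs : HasCompactSupport h) (x : E) {w : E}
    (hw : w ≠ 0) : HasCompactSupport fun t : ℝ => h (x + t • w) :=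
  hs.comp_isClosedEmbedding (isClosedEmbedding_ray x hw)

theorem Continuous.integrable_comp_ray {h : E → F} (hc : Continuous h) (hs : HasCompactSupport h)
    (x : E) {w : E} (hw : w ≠ 0) : Integrable fun t : ℝ => h (x + t • w) :=
  (hc.comp (by fun_prop)).integrable_of_hasCompactSupport (hs.comp_ray x hw)

variable [NormedSpace ℝ F]

theorem hasDerivAt_comp_ray {h : E → F} {x w : E} {t : ℝ}
    (hd : DifferentiableAt ℝ h (x + t • w)) :
    HasDerivAt (fun s : ℝ => h (x + s • w)) (fderiv ℝ h (x + t • w) w) t :=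
  hd.hasFDerivAt.comp_hasDerivAt t (by simpa using ((hasDerivAt_id t).smul_const w).const_add x)

theorem hasFDerivAt_integral_Ioi_comp_ray [FiniteDimensional ℝ E] {h : E → F}
    (hh : ContDiff ℝ 1 h) (hs : HasCompactSupport h) {w : E} (hw : w ≠ 0) (x : E) :
    HasFDerivAt (fun y => ∫ t in Ioi (0 : ℝ), h (y + t • w))
      (∫ t in Ioi (0 : ℝ), fderiv ℝ h (x + t • w)) x := by
  have hh' : Continuous (fderiv ℝ h) := hh.continuous_fderiv one_ne_zero
  have hs' : HasCompactSupport (fderiv ℝ h) := hs.fderiv (𝕜 := ℝ)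
  obtain ⟨C, hC⟩ := hh'.bounded_above_of_compact_support hs'
  -- for `t ∉ S`, the rays from all points of `ball x 1` avoid the support of `fderiv ℝ h` at `t`
  set S := (fun t : ℝ => x + t • w) ⁻¹' Metric.cthickening 1 (tsupport (fderiv ℝ h))
  have hS : IsCompact S := (isClosedEmbedding_ray x hw).isCompact_preimage hs'.isCompact.cthickening
  refine hasFDerivAt_integral_of_dominated_of_fderiv_le (μ := volume.restrict (Ioi 0))
    (F := fun y t => h (y + t • w)) (F' := fun y t => fderiv ℝ h (y + t • w))
    (bound := S.indicator fun _ => C) (Metric.ball_mem_nhds x one_pos)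
    (Eventually.of_forall fun y => ?_)
    ((hh.continuous.integrable_comp_ray hs x hw).integrableOn)
    (hh'.comp (by fun_prop)).aestronglyMeasurable
    (Eventually.of_forall fun t y hy => ?_)
    ((integrable_indicator_iff hS.measurableSet).2 (integrableOn_const hS.measure_ne_top)).restrict
    (Eventually.of_forall fun t y _ => ?_)
  · exact (hh.continuous.comp (by fun_prop)).aestronglyMeasurable
  · by_cases ht : t ∈ S
    · simpa [ht] using hC _
    · have hy' : y + t • w ∉ tsupport (fderiv ℝ h) := fun hmem =>
        ht (Metric.mem_cthickening_of_dist_le _ _ _ _ hmem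
          (by simpa [dist_comm] using (Metric.mem_ball.1 hy).le))
      simp [ht, image_eq_zero_of_notMem_tsupport hy']
  · exact ((hh.differentiable one_ne_zero _).hasFDerivAt).comp y
      ((hasFDerivAt_id y).add_const _)

variable [CompleteSpace F]

theorem integral_Ioi_fderiv_comp_ray_apply {h : E → F} (hh : ContDiff ℝ 1 h)
    (hs : HasCompactSupport h) {w : E} (hw : w ≠ 0) (x : E) :
    ∫ t in Ioi (0 : ℝ), fderiv ℝ h (x + t • w) w = -h x := by
  have hderiv : ∀ t : ℝ, deriv (fun s : ℝ => h (x + s • w)) t = fderiv ℝ h (x + t • w) w :=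
    fun t => (hasDerivAt_comp_ray (hh.differentiable one_ne_zero _)).deriv
  simpa only [hderiv, zero_smul, add_zero] using (hs.comp_ray x hw).integral_Ioi_deriv_eq
    (f := fun s : ℝ => h (x + s • w)) (hh.comp (by fun_prop)) 0

theorem integral_Ioi_comp_ray_eq_sub {φ : E → F} {h : E → F} (hφ : Differentiable ℝ φ)
    (hc : Continuous h) (hs : HasCompactSupport h) {w : E} (hw : w ≠ 0)
    (hφh : ∀ y, fderiv ℝ φ y w = h y) {x : E} {c : F}
    (hlim : Tendsto (fun t : ℝ => φ (x + t • w)) atTop (𝓝 c)) :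
    ∫ t in Ioi (0 : ℝ), h (x + t • w) = c - φ x := by
  have hderiv (t : ℝ) : HasDerivAt (fun s : ℝ => φ (x + s • w)) (h (x + t • w)) t := by
    rw [← hφh]
    exact hasDerivAt_comp_ray (hφ _)
  simpa using integral_Ioi_of_hasDerivAt_of_tendsto' (a := 0) (fun t _ => hderiv t)
    (hc.integrable_comp_ray hs x hw).integrableOn hlim

end Ray

section Plane

variable {F : Type*} [NormedAddCommGroup F] [NormedSpace ℝ F]

theorem SuppInDisc.hasCompactSupport {h : ℝ × ℝ → ℝ} (hs : SuppInDisc h) : HasCompactSupport h := by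
  refine HasCompactSupport.intro (isCompact_closedBall 0 1) fun y hy => hs y ?_
  have hy' : 1 < |y.1| ∨ 1 < |y.2| := by simpa [Prod.norm_def, or_iff_not_imp_left] using hy
  rcases hy' with hy' | hy' <;> nlinarith [sq_abs y.1, sq_abs y.2, sq_nonneg y.1, sq_nonneg y.2]

theorem SuppInDisc.eq_zero_of_one_lt_snd {h : ℝ × ℝ → ℝ} (hs : SuppInDisc h) {y : ℝ × ℝ}
    (hy : 1 < y.2) : h y = 0 :=
  hs y (by nlinarith [sq_nonneg y.1])

theorem eventually_one_lt_snd_ray (x : ℝ × ℝ) {w : ℝ × ℝ} (hw : 0 < w.2) :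
    ∀ᶠ t : ℝ in atTop, 1 < (x + t • w).2 := by
  filter_upwards [eventually_gt_atTop ((1 - x.2) / w.2)] with t ht
  rw [div_lt_iff₀ hw] at ht
  simp only [Prod.snd_add, Prod.smul_snd, smul_eq_mul]
  linarith

theorem exists_eq_const_of_fderiv_eq_zero_of_one_lt_snd {φ : ℝ × ℝ → F}
    (hφ : Differentiable ℝ φ) (h0 : ∀ y : ℝ × ℝ, 1 < y.2 → fderiv ℝ φ y = 0) :
    ∃ c, ∀ y : ℝ × ℝ, 1 < y.2 → φ y = c :=
  (isOpen_lt continuous_const continuous_snd).exists_is_const_of_fderiv_eq_zero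
    (convex_halfSpace_gt (LinearMap.snd ℝ ℝ ℝ).isLinear 1).isPreconnected hφ.differentiableOn h0

theorem ContinuousLinearMap.apply_eq_smul_add_smul (L : ℝ × ℝ →L[ℝ] F) (v : ℝ × ℝ) :
    L v = v.1 • L (1, 0) + v.2 • L (0, 1) := by
  conv_lhs => rw [show v = v.1 • ((1 : ℝ), (0 : ℝ)) + v.2 • ((0 : ℝ), (1 : ℝ)) by ext <;> simp]
  rw [map_add, map_smul, map_smul]

theorem contDiff_one_of_continuous_fderiv_apply {φ : ℝ × ℝ → F} (hφ : Differentiable ℝ φ)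
    (h1 : Continuous fun x => fderiv ℝ φ x (1, 0)) (h2 : Continuous fun x => fderiv ℝ φ x (0, 1)) :
    ContDiff ℝ 1 φ := by
  refine contDiff_one_iff_fderiv.2 ⟨hφ, continuous_clm_apply.2 fun v => ?_⟩
  simp_rw [ContinuousLinearMap.apply_eq_smul_add_smul _ v]
  fun_prop

end Plane

section Beam

variable {h : ℝ × ℝ → ℝ} {w : ℝ × ℝ}

theorem differentiable_Xbeam (hh : ContDiff ℝ 1 h) (hs : HasCompactSupport h) (hw : w ≠ 0) :
    Differentiable ℝ (Xbeam w h) := fun x =>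
  (hasFDerivAt_integral_Ioi_comp_ray hh hs hw x).differentiableAt

theorem fderiv_Xbeam_apply_self (hh : ContDiff ℝ 1 h) (hs : HasCompactSupport h) (hw : w ≠ 0)
    (x : ℝ × ℝ) : fderiv ℝ (Xbeam w h) x w = -h x := by
  have hX : HasFDerivAt (Xbeam w h) _ x := hasFDerivAt_integral_Ioi_comp_ray hh hs hw x
  rw [hX.fderiv,
    ContinuousLinearMap.integral_apply ((hh.continuous_fderiv one_ne_zero).integrable_comp_ray
      (hs.fderiv (𝕜 := ℝ)) x hw).integrableOn,
    integral_Ioi_fderiv_comp_ray_apply hh hs hw x]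

theorem fderiv_apply_of_Xbeam_add_Xbeam_eq_zero {g : ℝ × ℝ → ℝ} {v : ℝ × ℝ}
    (hh : ContDiff ℝ 1 h) (hs : HasCompactSupport h) (hw : w ≠ 0)
    (hg : ContDiff ℝ 1 g) (hgs : HasCompactSupport g) (hv : v ≠ 0)
    (hX : ∀ x, Xbeam w h x + Xbeam v g x = 0) (a : ℝ) (x : ℝ × ℝ) :
    fderiv ℝ (fun y => -a * Xbeam w h y) x w = a * h x ∧
      fderiv ℝ (fun y => -a * Xbeam w h y) x v = -a * g x := by
  have hXv : (fun y => -a * Xbeam w h y) = fun y => a * Xbeam v g y :=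
    funext fun y => by linear_combination -a * hX y
  constructor
  · rw [fderiv_const_mul (differentiable_Xbeam hh hs hw x), smul_apply, smul_eq_mul,
      fderiv_Xbeam_apply_self hh hs hw]
    ring
  · rw [hXv, fderiv_const_mul (differentiable_Xbeam hg hgs hv x), smul_apply, smul_eq_mul,
      fderiv_Xbeam_apply_self hg hgs hv]
    ring

theorem Xbeam_add_Xbeam_eq_zero_of_fderiv_apply {φ g : ℝ × ℝ → ℝ} {v : ℝ × ℝ}
    (hφ : Differentiable ℝ φ) (hφ0 : ∀ y : ℝ × ℝ, 1 < y.2 → fderiv ℝ φ y = 0)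
    (hh : Continuous h) (hs : HasCompactSupport h) (hw : 0 < w.2)
    (hg : Continuous g) (hgs : HasCompactSupport g) (hv : 0 < v.2) {a : ℝ} (ha : a ≠ 0)
    (hφw : ∀ y, fderiv ℝ φ y w = a * h y) (hφv : ∀ y, fderiv ℝ φ y v = -a * g y) (x : ℝ × ℝ) :
    Xbeam w h x + Xbeam v g x = 0 := by
  obtain ⟨c, hc⟩ := exists_eq_const_of_fderiv_eq_zero_of_one_lt_snd hφ hφ0
  have hlim {w : ℝ × ℝ} (hw : 0 < w.2) : Tendsto (fun t : ℝ => φ (x + t • w)) atTop (𝓝 c) :=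
    tendsto_const_nhds.congr' ((eventually_one_lt_snd_ray x hw).mono fun t ht => (hc _ ht).symm)
  have hXw : a * Xbeam w h x = c - φ x := by
    rw [Xbeam, ← integral_const_mul]
    exact integral_Ioi_comp_ray_eq_sub hφ (by fun_prop) hs.mul_left (by rintro rfl; simp at hw)
      hφw (hlim hw)
  have hXv : -a * Xbeam v g x = c - φ x := by
    rw [Xbeam, ← integral_const_mul]
    exact integral_Ioi_comp_ray_eq_sub hφ (by fun_prop) hgs.mul_left (by rintro rfl; simp at hv)
      hφv (hlim hv)
  apply mul_left_cancel₀ ha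
  linear_combination hXw - hXv

end Beam

section Transverse

variable {f11 f12 f22 : ℝ × ℝ → ℝ}

/-- `⟨f, w⊥ ⊗ w⊥⟩` with `w⊥ = (w₂, -w₁)`: the component of `f` integrated along `w` by `VlineT`. -/
def transverseComponent (f11 f12 f22 : ℝ × ℝ → ℝ) (w : ℝ × ℝ) (y : ℝ × ℝ) : ℝ :=
  w.2 ^ 2 * f11 y - 2 * w.1 * w.2 * f12 y + w.1 ^ 2 * f22 y

theorem VlineT_eq_Xbeam_add_Xbeam (u1 u2 : ℝ) (x : ℝ × ℝ) :
    VlineT u1 u2 f11 f12 f22 x = Xbeam (u1, u2) (transverseComponent f11 f12 f22 (u1, u2)) x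
      + Xbeam (-u1, u2) (transverseComponent f11 f12 f22 (-u1, u2)) x := by
  simp only [VlineT, Pi.add_apply]
  congr 3
  funext y
  simp only [transverseComponent]
  ring

theorem contDiff_transverseComponent {n : WithTop ℕ∞} (h11 : ContDiff ℝ n f11)
    (h12 : ContDiff ℝ n f12) (h22 : ContDiff ℝ n f22) (w : ℝ × ℝ) :
    ContDiff ℝ n (transverseComponent f11 f12 f22 w) := by
  unfold transverseComponent
  fun_prop

theorem hasCompactSupport_transverseComponent (h11 : HasCompactSupport f11)
    (h12 : HasCompactSupport f12) (h22 : HasCompactSupport f22) (w : ℝ × ℝ) :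
    HasCompactSupport (transverseComponent f11 f12 f22 w) :=
  (h11.mul_left.sub h12.mul_left).add h22.mul_left

theorem apply_basis_eq_iff_apply_vline_eq {u1 u2 : ℝ} (hu1 : u1 ≠ 0) (hu2 : u2 ≠ 0)
    (L : ℝ × ℝ →L[ℝ] ℝ) (x : ℝ × ℝ) :
    (L (1, 0) = u2 ^ 2 * f11 x + u1 ^ 2 * f22 x ∧ L (0, 1) = -(2 * u1 ^ 2) * f12 x) ↔
      (L (u1, u2) = u1 * transverseComponent f11 f12 f22 (u1, u2) x ∧
        L (-u1, u2) = -u1 * transverseComponent f11 f12 f22 (-u1, u2) x) := by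
  rw [L.apply_eq_smul_add_smul (u1, u2), L.apply_eq_smul_add_smul (-u1, u2)]
  simp only [transverseComponent, smul_eq_mul]
  constructor
  · rintro ⟨h1, h2⟩
    constructor <;> rw [h1, h2] <;> ring
  · rintro ⟨hu, hv⟩
    constructor
    · apply mul_left_cancel₀ (mul_ne_zero two_ne_zero hu1)
      linear_combination hu - hv
    · apply mul_left_cancel₀ (mul_ne_zero two_ne_zero hu2)
      linear_combination hu + hv

end Transverse

theorem kernel_transverse_general
    (u1 u2 : ℝ) (hu1 : 0 < u1) (hu2 : 0 < u2)
    (f11 f12 f22 : ℝ × ℝ → ℝ)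
    (h11 : ContDiff ℝ 2 f11) (h12 : ContDiff ℝ 2 f12) (h22 : ContDiff ℝ 2 f22)
    (s11 : SuppInDisc f11) (s12 : SuppInDisc f12) (s22 : SuppInDisc f22) :
    (∀ x : ℝ × ℝ, VlineT u1 u2 f11 f12 f22 x = 0) ↔
      ∃ φ : ℝ × ℝ → ℝ, ContDiff ℝ 1 φ ∧
        ∀ x : ℝ × ℝ,
          fderiv ℝ φ x ((1 : ℝ), (0 : ℝ)) = u2 ^ 2 * f11 x + u1 ^ 2 * f22 x ∧
          fderiv ℝ φ x ((0 : ℝ), (1 : ℝ)) = -(2 * u1 ^ 2) * f12 x := by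
  have hg w : ContDiff ℝ 1 (transverseComponent f11 f12 f22 w) :=
    (contDiff_transverseComponent h11 h12 h22 w).of_le one_le_two
  have hgs := hasCompactSupport_transverseComponent s11.hasCompactSupport s12.hasCompactSupport
    s22.hasCompactSupport
  have hu : ((u1, u2) : ℝ × ℝ) ≠ 0 := by simp [hu1.ne']
  have hv : ((-u1, u2) : ℝ × ℝ) ≠ 0 := by simp [hu1.ne']
  have hgrad_iff (φ : ℝ × ℝ → ℝ) x :=
    apply_basis_eq_iff_apply_vline_eq (f11 := f11) (f12 := f12) (f22 := f22) hu1.ne' hu2.ne'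
      (fderiv ℝ φ x) x
  simp_rw [VlineT_eq_Xbeam_add_Xbeam]
  constructor
  · intro hX
    have hgrad x := (hgrad_iff _ x).2
      (fderiv_apply_of_Xbeam_add_Xbeam_eq_zero (hg _) (hgs _) hu (hg _) (hgs _) hv hX u1 x)
    refine ⟨_, contDiff_one_of_continuous_fderiv_apply
      ((differentiable_Xbeam (hg _) (hgs _) hu).const_mul _) ?_ ?_, hgrad⟩
    · simp_rw [fun x => (hgrad x).1]
      fun_prop
    · simp_rw [fun x => (hgrad x).2]
      fun_prop
  · rintro ⟨φ, hφ, hgrad⟩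
    refine Xbeam_add_Xbeam_eq_zero_of_fderiv_apply (hφ.differentiable one_ne_zero) (fun y hy => ?_)
      (hg _).continuous (hgs _) hu2 (hg _).continuous (hgs _) hu2 hu1.ne'
      (fun y => ((hgrad_iff φ y).1 (hgrad y)).1) (fun y => ((hgrad_iff φ y).1 (hgrad y)).2)
    refine ContinuousLinearMap.ext fun v => ?_
    simp [ContinuousLinearMap.apply_eq_smul_add_smul _ v, hgrad y, s11.eq_zero_of_one_lt_snd hy,
      s12.eq_zero_of_one_lt_snd hy, s22.eq_zero_of_one_lt_snd hy]

/-- kernel description of the transverse V-line transform. -/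
theorem kernel_transverse
    (u1 u2 : ℝ) (hu : u1 ^ 2 + u2 ^ 2 = 1) (hu1 : 0 < u1) (hu2 : 0 < u2)
    (f11 f12 f22 : ℝ × ℝ → ℝ)
    (h11 : ContDiff ℝ 2 f11) (h12 : ContDiff ℝ 2 f12) (h22 : ContDiff ℝ 2 f22)
    (s11 : SuppInDisc f11) (s12 : SuppInDisc f12) (s22 : SuppInDisc f22) :
    (∀ x : ℝ × ℝ, VlineT u1 u2 f11 f12 f22 x = 0) ↔
      ∃ φ : ℝ × ℝ → ℝ, ContDiff ℝ 1 φ ∧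
        ∀ x : ℝ × ℝ,
          fderiv ℝ φ x ((1 : ℝ), (0 : ℝ)) = u2 ^ 2 * f11 x + u1 ^ 2 * f22 x ∧
          fderiv ℝ φ x ((0 : ℝ), (1 : ℝ)) = -(2 * u1 ^ 2) * f12 x :=
  kernel_transverse_general u1 u2 hu1 hu2 f11 f12 f22 h11 h12 h22 s11 s12 s22
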